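/- Let T be a finite rooted tree, μ the uniform distribution over proper k-colourings, r its root, and L its leaf set. Define the random variable Y(σ_L) = μ^{σ_L}_{r}(c) − 1/k for σ_L a leaf colouring. Then E_{μ^{c at root}}[Y] = k·Σ_{σ_L} μ_L(σ_L)·(μ^{σ_L}_{r}(c) − 1/k)^2, i.e. the conditional expectation of the magnetization equals k times its unconditional second moment. In particular this quantity is nonnegative. -/

import Mathlib

open Finset

noncomputable section
open scoped Classical

variable {V : Type*}

/-- A proper `k`-colouring w.r.t. an adjacency relation `Adj`. -/
def Proper (k : ℕ) (Adj : V → V → Prop) (σ : V → Fin k) : Prop :=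
  ∀ u v, Adj u v → σ u ≠ σ v

/-- Number of colourings satisfying a predicate. -/
noncomputable def cnt [Fintype V] [DecidableEq V] (k : ℕ) (P : (V → Fin k) → Prop) : ℕ :=
  (Finset.univ.filter P).card

/-- Probability that the root gets colour `c` under the uniform distribution over
proper colourings conditioned on the event `B`. -/
noncomputable def condProbRoot [Fintype V] [DecidableEq V] (k : ℕ) (Adj : V → V → Prop)
    (r : V) (B : (V → Fin k) → Prop) (c : Fin k) : ℝ :=
  (cnt k (fun σ => Proper k Adj σ ∧ B σ ∧ σ r = c) : ℝ) /
    (cnt k (fun σ => Proper k Adj σ ∧ B σ) : ℝ)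

/-- Total variation distance of the root marginals of the Gibbs distribution
conditioned on `B₁` resp. `B₂`. -/
noncomputable def tvRoot [Fintype V] [DecidableEq V] (k : ℕ) (Adj : V → V → Prop)
    (r : V) (B₁ B₂ : (V → Fin k) → Prop) : ℝ :=
  (1/2) * ∑ c : Fin k, |condProbRoot k Adj r B₁ c - condProbRoot k Adj r B₂ c|

/-- Marginal probability, under the uniform distribution over proper colourings,
that the leaves `L` receive the colouring `τ`. -/
noncomputable def leafMarg [Fintype V] [DecidableEq V] (k : ℕ) (Adj : V → V → Prop)
    (L : Finset V) (τ : ↥L → Fin k) : ℝ :=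
  (cnt k (fun σ => Proper k Adj σ ∧ ∀ v : ↥L, σ ↑v = τ v) : ℝ) /
    (cnt k (fun σ => Proper k Adj σ) : ℝ)

/-- Marginal probability that the leaves `L` receive the colouring `τ`, conditional
on the root being coloured `a`. -/
noncomputable def leafMargCond [Fintype V] [DecidableEq V] (k : ℕ) (Adj : V → V → Prop)
    (r : V) (L : Finset V) (a : Fin k) (τ : ↥L → Fin k) : ℝ :=
  (cnt k (fun σ => Proper k Adj σ ∧ σ r = a ∧ ∀ v : ↥L, σ ↑v = τ v) : ℝ) /
    (cnt k (fun σ => Proper k Adj σ ∧ σ r = a) : ℝ)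

lemma cnt_congr [Fintype V] [DecidableEq V] (k : ℕ) {P Q : (V → Fin k) → Prop}
    (h : ∀ σ, P σ ↔ Q σ) : cnt k P = cnt k Q := by
  unfold cnt; congr 1; ext σ; simp [h σ]

lemma cnt_mono [Fintype V] [DecidableEq V] (k : ℕ) {P Q : (V → Fin k) → Prop}
    (h : ∀ σ, P σ → Q σ) : cnt k P ≤ cnt k Q := by
  apply Finset.card_le_card
  intro σ hσ
  simp only [mem_filter, mem_univ, true_and] at *
  exact h σ hσ

lemma cnt_root_color [Fintype V] [DecidableEq V] (k : ℕ) (Adj : V → V → Prop) (r : V)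
    (a b : Fin k) :
    cnt k (fun σ => Proper k Adj σ ∧ σ r = a) = cnt k (fun σ => Proper k Adj σ ∧ σ r = b) := by
  unfold cnt
  apply Finset.card_bij (fun σ _ => (Equiv.swap a b) ∘ σ)
  · intro σ hσ
    simp only [mem_filter, mem_univ, true_and] at *
    obtain ⟨hp, hr⟩ := hσ
    refine ⟨fun u v huv h => hp u v huv ((Equiv.swap a b).injective h), ?_⟩
    simp [Function.comp, hr]
  · intro σ₁ _ σ₂ _ h
    funext v
    exact (Equiv.swap a b).injective (congrFun h v)
  · intro σ hσ
    simp only [mem_filter, mem_univ, true_and] at hσ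
    obtain ⟨hp, hr⟩ := hσ
    refine ⟨(Equiv.swap a b) ∘ σ, ?_, ?_⟩
    · simp only [mem_filter, mem_univ, true_and]
      refine ⟨fun u v huv h => hp u v huv ((Equiv.swap a b).injective h), ?_⟩
      simp [Function.comp, hr]
    · funext v; simp [Function.comp]

lemma cnt_root_sum [Fintype V] [DecidableEq V] (k : ℕ) (Adj : V → V → Prop) (r : V) :
    ∑ a : Fin k, cnt k (fun σ => Proper k Adj σ ∧ σ r = a)
      = cnt k (fun σ => Proper k Adj σ) := by
  unfold cnt
  rw [Finset.card_eq_sum_card_fiberwise (f := fun σ => σ r) (t := univ)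
    (fun _ _ => mem_univ _)]
  apply Finset.sum_congr rfl
  intro a _
  rw [filter_filter]
  exact congrArg Finset.card (by ext σ; simp)

lemma cnt_leaf_sum [Fintype V] [DecidableEq V] (k : ℕ) (P : (V → Fin k) → Prop)
    (L : Finset V) :
    ∑ τ : ↥L → Fin k, cnt k (fun σ => P σ ∧ ∀ v : ↥L, σ ↑v = τ v) = cnt k P := by
  unfold cnt
  rw [Finset.card_eq_sum_card_fiberwise (f := fun σ => fun v : ↥L => σ ↑v) (t := univ)
    (fun _ _ => mem_univ _)]
  apply Finset.sum_congr rfl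
  intro τ _
  rw [filter_filter]
  exact congrArg Finset.card (by ext σ; simp [funext_iff])


/-- the conditional expectation of the magnetization
`Y(σ_L) = μ^{σ_L}_r(c) − 1/k` (root conditioned to colour `c`) equals `k` times its
unconditional second moment; in particular it is nonnegative. -/
theorem stmt2 [Fintype V] [DecidableEq V] (k : ℕ) (hk : 0 < k)
    (Adj : V → V → Prop) (r : V) (L : Finset V) (c : Fin k)
    (hΩ : cnt k (fun σ => Proper k Adj σ) ≠ 0) :
    (∑ σL : ↥L → Fin k,
        leafMargCond k Adj r L c σL *
          (condProbRoot k Adj r (fun σ => ∀ v : ↥L, σ ↑v = σL v) c - 1 / k))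
      = (k : ℝ) * ∑ σL : ↥L → Fin k,
          leafMarg k Adj L σL *
            (condProbRoot k Adj r (fun σ => ∀ v : ↥L, σ ↑v = σL v) c - 1 / k) ^ 2
    ∧ 0 ≤ ∑ σL : ↥L → Fin k,
        leafMargCond k Adj r L c σL *
          (condProbRoot k Adj r (fun σ => ∀ v : ↥L, σ ↑v = σL v) c - 1 / k) := by
  classical
  set Z : ℝ := (cnt k (fun σ => Proper k Adj σ) : ℝ) with hZdef
  set Zc : ℝ := (cnt k (fun σ => Proper k Adj σ ∧ σ r = c) : ℝ) with hZcdef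
  set n : (↥L → Fin k) → ℝ :=
    fun τ => (cnt k (fun σ => Proper k Adj σ ∧ ∀ v : ↥L, σ ↑v = τ v) : ℝ) with hndef
  set m : (↥L → Fin k) → ℝ :=
    fun τ => (cnt k (fun σ => Proper k Adj σ ∧ σ r = c ∧ ∀ v : ↥L, σ ↑v = τ v) : ℝ) with hmdef
  have hk' : (k : ℝ) ≠ 0 := Nat.cast_ne_zero.mpr hk.ne'
  have hZpos : 0 < Z := by
    have := Nat.pos_of_ne_zero hΩ
    rw [hZdef]; exact_mod_cast this
  have hkZc : (k : ℝ) * Zc = Z := by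
    have h1 := cnt_root_sum k Adj r
    have h2 : ∀ a : Fin k, cnt k (fun σ => Proper k Adj σ ∧ σ r = a)
        = cnt k (fun σ => Proper k Adj σ ∧ σ r = c) := fun a => cnt_root_color k Adj r a c
    rw [Finset.sum_congr rfl (fun a _ => h2 a), Finset.sum_const, Finset.card_univ,
      Fintype.card_fin, smul_eq_mul] at h1
    rw [hZdef, hZcdef]
    exact_mod_cast h1
  have hZcpos : 0 < Zc := by
    rcases lt_or_eq_of_le (show (0:ℝ) ≤ Zc from by rw [hZcdef]; exact Nat.cast_nonneg _) with h | h
    · exact h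
    · exact absurd (by rw [← hkZc, ← h, mul_zero]) hZpos.ne
  have hsum_n : ∑ τ : ↥L → Fin k, n τ = Z := by
    have := cnt_leaf_sum k (fun σ => Proper k Adj σ) L
    simp only [hndef, hZdef]
    exact_mod_cast this
  have hsum_m : ∑ τ : ↥L → Fin k, m τ = Zc := by
    have h1 := cnt_leaf_sum k (fun σ => Proper k Adj σ ∧ σ r = c) L
    have h2 : ∀ τ : ↥L → Fin k,
        cnt k (fun σ => (Proper k Adj σ ∧ σ r = c) ∧ ∀ v : ↥L, σ ↑v = τ v)
          = cnt k (fun σ => Proper k Adj σ ∧ σ r = c ∧ ∀ v : ↥L, σ ↑v = τ v) :=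
      fun τ => cnt_congr k (fun σ => by tauto)
    rw [Finset.sum_congr rfl (fun τ _ => h2 τ)] at h1
    simp only [hmdef, hZcdef]
    exact_mod_cast h1
  have hzero : ∀ τ : ↥L → Fin k, n τ = 0 → m τ = 0 := by
    intro τ h
    have hle := cnt_mono k
      (show ∀ σ, (Proper k Adj σ ∧ σ r = c ∧ ∀ v : ↥L, σ ↑v = τ v)
        → (Proper k Adj σ ∧ ∀ v : ↥L, σ ↑v = τ v) from fun σ hσ => ⟨hσ.1, hσ.2.2⟩)
    simp only [hmdef, hndef] at *
    have : cnt k (fun σ => Proper k Adj σ ∧ ∀ v : ↥L, σ ↑v = τ v) = 0 := by exact_mod_cast h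
    rw [this, Nat.le_zero] at hle
    exact_mod_cast hle
  have hn0 : ∀ τ : ↥L → Fin k, 0 ≤ n τ := by
    intro τ; simp only [hndef]; exact Nat.cast_nonneg _
  have hcond : ∀ τ : ↥L → Fin k,
      condProbRoot k Adj r (fun σ => ∀ v : ↥L, σ ↑v = τ v) c = m τ / n τ := by
    intro τ
    unfold condProbRoot
    rw [cnt_congr k (show ∀ σ, (Proper k Adj σ ∧ (∀ v : ↥L, σ ↑v = τ v) ∧ σ r = c)
      ↔ (Proper k Adj σ ∧ σ r = c ∧ ∀ v : ↥L, σ ↑v = τ v) from fun σ => by tauto)]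
  have hLMC : ∀ τ : ↥L → Fin k, leafMargCond k Adj r L c τ = m τ / Zc := fun τ => rfl
  have hLM : ∀ τ : ↥L → Fin k, leafMarg k Adj L τ = n τ / Z := fun τ => rfl
  simp only [hLMC, hLM, hcond]
  have key : ∀ τ : ↥L → Fin k,
      m τ * (m τ / n τ - 1 / k) - n τ * (m τ / n τ - 1 / k) ^ 2
        = (1 / k) * (m τ - n τ / k) := by
    intro τ
    by_cases h : n τ = 0
    · rw [h, hzero τ h]; simp
    · field_simp
      ring
  have hmain : ∑ τ : ↥L → Fin k, m τ * (m τ / n τ - 1 / k)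
      = ∑ τ : ↥L → Fin k, n τ * (m τ / n τ - 1 / k) ^ 2 := by
    rw [← sub_eq_zero, ← Finset.sum_sub_distrib]
    calc ∑ τ : ↥L → Fin k, (m τ * (m τ / n τ - 1 / k) - n τ * (m τ / n τ - 1 / k) ^ 2)
        = ∑ τ : ↥L → Fin k, (1 / k) * (m τ - n τ / k) := Finset.sum_congr rfl (fun τ _ => key τ)
      _ = (1 / k) * (Zc - Z / k) := by
          rw [← Finset.mul_sum, Finset.sum_sub_distrib, hsum_m, ← Finset.sum_div, hsum_n]
      _ = 0 := by rw [← hkZc]; field_simp; ring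
  constructor
  · have e1 : ∑ τ : ↥L → Fin k, m τ / Zc * (m τ / n τ - 1 / k)
        = (∑ τ : ↥L → Fin k, m τ * (m τ / n τ - 1 / k)) / Zc := by
      rw [Finset.sum_div]; exact Finset.sum_congr rfl (fun τ _ => by ring)
    have e2 : (k : ℝ) * ∑ τ : ↥L → Fin k, n τ / Z * (m τ / n τ - 1 / k) ^ 2
        = (∑ τ : ↥L → Fin k, n τ * (m τ / n τ - 1 / k) ^ 2) / Zc := by
      rw [Finset.mul_sum, Finset.sum_div]
      refine Finset.sum_congr rfl (fun τ _ => ?_)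
      rw [← hkZc]
      field_simp
    rw [e1, e2, hmain]
  · have e2 : ∑ τ : ↥L → Fin k, m τ / Zc * (m τ / n τ - 1 / k)
        = (k : ℝ) * ∑ τ : ↥L → Fin k, n τ / Z * (m τ / n τ - 1 / k) ^ 2 := by
      have e1 : ∑ τ : ↥L → Fin k, m τ / Zc * (m τ / n τ - 1 / k)
          = (∑ τ : ↥L → Fin k, m τ * (m τ / n τ - 1 / k)) / Zc := by
        rw [Finset.sum_div]; exact Finset.sum_congr rfl (fun τ _ => by ring)
      have e2' : (k : ℝ) * ∑ τ : ↥L → Fin k, n τ / Z * (m τ / n τ - 1 / k) ^ 2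
          = (∑ τ : ↥L → Fin k, n τ * (m τ / n τ - 1 / k) ^ 2) / Zc := by
        rw [Finset.mul_sum, Finset.sum_div]
        refine Finset.sum_congr rfl (fun τ _ => ?_)
        rw [← hkZc]
        field_simp
      rw [e1, e2', hmain]
    rw [e2]
    apply mul_nonneg (Nat.cast_nonneg _)
    apply Finset.sum_nonneg
    intro τ _
    exact mul_nonneg (div_nonneg (hn0 τ) hZpos.le) (sq_nonneg _)
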